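/- The polynomial P₂ = x₄x₁² + x₅x₂² + x₆x₃² + x₇x₁x₂ + x₈x₂x₃ + x₉x₁x₃ cannot be obtained from det₃ by an invertible linear change of variables together with a polynomial written in at most 8 linear forms; concretely, P₂ is not expressible as R(ℓ₁,…,ℓ₈) for linear forms ℓᵢ and a polynomial R in 8 variables. -/

import Mathlib

open MvPolynomial

noncomputable def P₂ : MvPolynomial (Fin 9) ℂ :=
  X 3 * X 0 ^ 2 + X 4 * X 1 ^ 2 + X 5 * X 2 ^ 2 +
    X 6 * X 0 * X 1 + X 7 * X 1 * X 2 + X 8 * X 0 * X 2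

private lemma sum_univ_nine' {M : Type*} [AddCommMonoid M] (f : Fin 9 → M) :
    ∑ i : Fin 9, f i = f 0 + f 1 + f 2 + f 3 + f 4 + f 5 + f 6 + f 7 + f 8 := by
  rw [Fin.sum_univ_castSucc, Fin.sum_univ_eight]
  rfl

private lemma chain' (R : MvPolynomial (Fin 8) ℂ) (ℓ : Fin 8 → MvPolynomial (Fin 9) ℂ)
    (j : Fin 9) :
    pderiv j (aeval ℓ R) = ∑ i : Fin 8, pderiv j (ℓ i) * aeval ℓ (pderiv i R) := by
  induction R using MvPolynomial.induction_on with
  | C a => simp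
  | add p q hp hq =>
    rw [map_add, map_add, hp, hq, ← Finset.sum_add_distrib]
    exact Finset.sum_congr rfl fun k _ => by rw [map_add, map_add, mul_add]
  | mul_X p i h =>
    have key : ∀ k : Fin 8, pderiv j (ℓ k) * aeval ℓ (pderiv k (p * X i)) =
        pderiv j (ℓ k) * (aeval ℓ (pderiv k p) * ℓ i)
          + pderiv j (ℓ k) * ((aeval ℓ p) * aeval ℓ (pderiv k (X i : MvPolynomial (Fin 8) ℂ))) :=
      fun k => by
      rw [pderiv_mul, map_add, map_mul, map_mul, aeval_X, mul_add]
    have h2 : ∑ k : Fin 8,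
        pderiv j (ℓ k) * ((aeval ℓ p) * aeval ℓ (pderiv k (X i : MvPolynomial (Fin 8) ℂ)))
        = aeval ℓ p * pderiv j (ℓ i) := by
      rw [Finset.sum_eq_single i (fun k _ hk => by rw [pderiv_X_of_ne (Ne.symm hk)]; simp)
        (by simp)]
      rw [pderiv_X_self, map_one, mul_one]; ring
    rw [Finset.sum_congr rfl fun k _ => key k, Finset.sum_add_distrib, h2,
      map_mul, aeval_X, pderiv_mul, h, Finset.sum_mul]
    rw [← Finset.sum_congr rfl fun k _ =>
      (mul_assoc (pderiv j (ℓ k)) (aeval ℓ (pderiv k p)) (ℓ i))]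

private lemma deg_one' (d : Fin 9 →₀ ℕ) (hd : d.degree = 1) : ∃ m, d = Finsupp.single m 1 := by
  have hne : d ≠ 0 := by intro h; rw [h, map_zero] at hd; exact one_ne_zero hd.symm
  obtain ⟨m, hm⟩ := Finsupp.ne_iff.mp hne
  rw [Finsupp.coe_zero, Pi.zero_apply] at hm
  have hms : m ∈ d.support := Finsupp.mem_support_iff.mpr hm
  have hsum : d m + ∑ k ∈ d.support.erase m, d k = 1 := by
    rw [Finset.add_sum_erase _ _ hms]; exact hd
  have hdm : d m = 1 := by omega
  have hrest : ∀ k ∈ d.support.erase m, d k = 0 := by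
    intro k hk
    have h2 : d k ≤ ∑ x ∈ d.support.erase m, d x :=
      Finset.single_le_sum (f := fun x => d x) (fun _ _ => Nat.zero_le _) hk
    omega
  refine ⟨m, Finsupp.ext fun j => ?_⟩
  rcases eq_or_ne j m with rfl | hj
  · simp [hdm]
  · rw [Finsupp.single_eq_of_ne' (Ne.symm hj)]
    by_cases hjs : j ∈ d.support
    · exact hrest j (Finset.mem_erase.mpr ⟨hj, hjs⟩)
    · exact Finsupp.notMem_support_iff.mp hjs

private lemma pderiv_of_linear' {p : MvPolynomial (Fin 9) ℂ} (hp : p.IsHomogeneous 1)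
    (k : Fin 9) :
    pderiv k p = C (coeff (Finsupp.single k 1) p) := by
  conv_lhs => rw [p.as_sum]
  rw [map_sum]
  rw [Finset.sum_eq_single (Finsupp.single k 1)]
  · rw [pderiv_monomial]
    simp
  · intro d hd hne
    have hdeg : d.degree = 1 := by
      rw [Finsupp.degree_eq_weight_one]; exact hp (MvPolynomial.mem_support_iff.mp hd)
    obtain ⟨m, rfl⟩ := deg_one' d hdeg
    have hmk : m ≠ k := fun h => hne (by rw [h])
    rw [pderiv_monomial, Finsupp.single_eq_of_ne' hmk]
    simp
  · intro h
    rw [pderiv_monomial, MvPolynomial.notMem_support_iff.mp h]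
    simp

private def pt' (a b : Fin 9) : Fin 9 → ℂ := fun i => if i = a then 1 else if i = b then 1 else 0

private lemma hD0 : pderiv (0 : Fin 9) P₂ = 2 * (X 3 * X 0) + X 6 * X 1 + X 8 * X 2 := by
  simp [P₂, pderiv_mul, pderiv_pow, pderiv_X, Pi.single_apply]; ring
private lemma hD1 : pderiv (1 : Fin 9) P₂ = 2 * (X 4 * X 1) + X 6 * X 0 + X 7 * X 2 := by
  simp [P₂, pderiv_mul, pderiv_pow, pderiv_X, Pi.single_apply]; ring
private lemma hD2 : pderiv (2 : Fin 9) P₂ = 2 * (X 5 * X 2) + X 7 * X 1 + X 8 * X 0 := by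
  simp [P₂, pderiv_mul, pderiv_pow, pderiv_X, Pi.single_apply]; ring
private lemma hD3 : pderiv (3 : Fin 9) P₂ = X 0 ^ 2 := by
  simp [P₂, pderiv_mul, pderiv_pow, pderiv_X, Pi.single_apply]
private lemma hD4 : pderiv (4 : Fin 9) P₂ = X 1 ^ 2 := by
  simp [P₂, pderiv_mul, pderiv_pow, pderiv_X, Pi.single_apply]
private lemma hD5 : pderiv (5 : Fin 9) P₂ = X 2 ^ 2 := by
  simp [P₂, pderiv_mul, pderiv_pow, pderiv_X, Pi.single_apply]
private lemma hD6 : pderiv (6 : Fin 9) P₂ = X 1 * X 0 := by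
  simp [P₂, pderiv_mul, pderiv_pow, pderiv_X, Pi.single_apply]
private lemma hD7 : pderiv (7 : Fin 9) P₂ = X 2 * X 1 := by
  simp [P₂, pderiv_mul, pderiv_pow, pderiv_X, Pi.single_apply]
private lemma hD8 : pderiv (8 : Fin 9) P₂ = X 2 * X 0 := by
  simp [P₂, pderiv_mul, pderiv_pow, pderiv_X, Pi.single_apply]

set_option maxHeartbeats 1000000 in
private lemma hLI' : LinearIndependent ℂ (fun j : Fin 9 => pderiv j P₂) := by
  rw [Fintype.linearIndependent_iff]
  intro g hsum
  rw [sum_univ_nine'] at hsum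
  simp only [hD0, hD1, hD2, hD3, hD4, hD5, hD6, hD7, hD8] at hsum
  have e0 := congrArg (eval (pt' 0 3)) hsum
  have e1 := congrArg (eval (pt' 1 4)) hsum
  have e2 := congrArg (eval (pt' 2 5)) hsum
  have e3 := congrArg (eval (pt' 0 0)) hsum
  have e4 := congrArg (eval (pt' 1 1)) hsum
  have e5 := congrArg (eval (pt' 2 2)) hsum
  have e6 := congrArg (eval (pt' 0 1)) hsum
  have e7 := congrArg (eval (pt' 1 2)) hsum
  have e8 := congrArg (eval (pt' 0 2)) hsum
  simp [smul_eq_C_mul, pt'] at e0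
  simp [smul_eq_C_mul, pt'] at e1
  simp [smul_eq_C_mul, pt'] at e2
  simp [smul_eq_C_mul, pt'] at e3
  simp [smul_eq_C_mul, pt'] at e4
  simp [smul_eq_C_mul, pt'] at e5
  simp [smul_eq_C_mul, pt'] at e6
  simp [smul_eq_C_mul, pt'] at e7
  simp [smul_eq_C_mul, pt'] at e8
  intro j
  fin_cases j
  · show g 0 = 0
    linear_combination (e0 - e3) / 2
  · show g 1 = 0
    linear_combination (e1 - e4) / 2
  · show g 2 = 0
    linear_combination (e2 - e5) / 2
  · show g 3 = 0
    linear_combination e3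
  · show g 4 = 0
    linear_combination e4
  · show g 5 = 0
    linear_combination e5
  · show g 6 = 0
    linear_combination e6 - e3 - e4
  · show g 7 = 0
    linear_combination e7 - e4 - e5
  · show g 8 = 0
    linear_combination e8 - e3 - e5

theorem P₂_not_in_eight_linear_forms :
    ¬ ∃ (R : MvPolynomial (Fin 8) ℂ) (ℓ : Fin 8 → MvPolynomial (Fin 9) ℂ),
        (∀ i, (ℓ i).IsHomogeneous 1) ∧ P₂ = MvPolynomial.aeval ℓ R := by
  rintro ⟨R, ℓ, hℓ, hP⟩
  set Q : Fin 8 → MvPolynomial (Fin 9) ℂ := fun i => aeval ℓ (pderiv i R) with hQ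
  set V := Submodule.span ℂ (Set.range Q) with hV
  have hmem : ∀ j, pderiv j P₂ ∈ V := by
    intro j
    rw [hP, chain']
    rw [Finset.sum_congr rfl fun i _ => by
      rw [pderiv_of_linear' (hℓ i) j, ← MvPolynomial.smul_eq_C_mul]]
    exact Submodule.sum_smul_mem V _ fun i _ => Submodule.subset_span ⟨i, rfl⟩
  haveI : FiniteDimensional ℂ V := FiniteDimensional.span_of_finite ℂ (Set.finite_range Q)
  have hLI2 : LinearIndependent ℂ (fun j => (⟨pderiv j P₂, hmem j⟩ : V)) := by
    apply LinearIndependent.of_comp V.subtype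
    exact hLI'
  have h9 : 9 ≤ Module.finrank ℂ V := by
    simpa using hLI2.fintype_card_le_finrank
  haveI : Fintype (Set.range Q) := Set.fintypeRange Q
  have h8 : Module.finrank ℂ V ≤ 8 := by
    refine le_trans (finrank_span_le_card (Set.range Q)) ?_
    rw [Set.toFinset_card]
    simpa using Fintype.card_range_le Q
  omega
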